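/- Let G be a tree, γ an automorphism of G, and A a nonempty connected set of vertices of G with γ(A) = A. Let v be a vertex with v ∉ A and let u ∈ A be the gate of v in A. If γ(u) ≠ u, then dist(v, γ(v)) = 2 · dist(v, A) + dist(u, γ(u)), where dist(v,A) is the minimum of dist(v,a) over a ∈ A. -/

import Mathlib

/-!
Join a geodesic from `v` to its gate `u`, a path inside `A` from `u` to `γ u`, and the image
under `γ` of the first geodesic, which runs from the gate `γ u` of `γ v` back to `γ v`. In a
tree this concatenation is a geodesic as soon as it is a path, and it is one: a vertex lying on
two of the pieces would force two distinct gates to coincide.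
-/

open SimpleGraph

/-- `u` is the gate of `v` in the set `S` of vertices of the graph `G`
(the paper's "vertex of departure"). -/
def IsGate {V : Type*} (G : SimpleGraph V) (S : Set V) (v u : V) : Prop :=
  u ∈ S ∧ ∀ s ∈ S, G.dist v s = G.dist v u + G.dist u s

namespace SimpleGraph

variable {V W : Type*} {G : SimpleGraph V} {G' : SimpleGraph W}

lemma Hom.edist_map_le (f : G →g G') (a b : V) : G'.edist (f a) (f b) ≤ G.edist a b := by
  by_cases h : G.Reachable a b
  · obtain ⟨w, hw⟩ := h.exists_walk_length_eq_edist
    simpa [hw] using edist_le (w.map f)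
  · simp [edist_eq_top_of_not_reachable h]

lemma Iso.edist_map (γ : G ≃g G') (a b : V) : G'.edist (γ a) (γ b) = G.edist a b :=
  le_antisymm (Hom.edist_map_le γ.toHom a b) <| by
    simpa using Hom.edist_map_le γ.symm.toHom (γ a) (γ b)

lemma Iso.dist_map (γ : G ≃g G') (a b : V) : G'.dist (γ a) (γ b) = G.dist a b := by
  simp only [dist, Iso.edist_map]

lemma Walk.IsPath.append {a b c : V} {p : G.Walk a b} {q : G.Walk b c} (hp : p.IsPath)
    (hq : q.IsPath) (h : ∀ x ∈ p.support, x ∈ q.support → x = b) : (p.append q).IsPath := by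
  rw [Walk.isPath_def, Walk.support_append]
  have hq' := q.cons_tail_support ▸ hq.support_nodup
  refine hp.support_nodup.append hq'.of_cons fun x hxp hxq => ?_
  obtain rfl := h x hxp (List.mem_of_mem_tail hxq)
  exact (List.nodup_cons.mp hq').1 hxq

lemma exists_isPath_forall_mem_support [DecidableEq V] {A : Set V}
    (hA : (G.induce A).Preconnected) {a b : V} (ha : a ∈ A) (hb : b ∈ A) :
    ∃ p : G.Walk a b, p.IsPath ∧ ∀ x ∈ p.support, x ∈ A := by
  obtain ⟨w⟩ := hA ⟨a, ha⟩ ⟨b, hb⟩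
  let w' := w.map (Embedding.induce A).toHom
  refine ⟨w'.bypass, w'.bypass_isPath, fun x hx => ?_⟩
  have hx' := w'.support_bypass_subset_support hx
  rw [Walk.support_map, List.mem_map] at hx'
  obtain ⟨y, -, rfl⟩ := hx'
  exact y.2

lemma IsAcyclic.length_eq_dist (hG : G.IsAcyclic) {a b : V} {p : G.Walk a b} (hp : p.IsPath) :
    p.length = G.dist a b := by
  obtain ⟨q, hq, hlen⟩ := p.reachable.exists_path_of_dist
  obtain rfl : p = q :=
    congrArg Subtype.val ((hG.subsingleton_path a b).elim ⟨p, hp⟩ ⟨q, hq⟩)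
  exact hlen

lemma IsAcyclic.dist_add_dist_of_mem_support [DecidableEq V] (hG : G.IsAcyclic) {a b x : V}
    {p : G.Walk a b} (hp : p.IsPath) (hx : x ∈ p.support) :
    G.dist a x + G.dist x b = G.dist a b := by
  rw [← hG.length_eq_dist (hp.takeUntil hx), ← hG.length_eq_dist (hp.dropUntil hx),
    ← hG.length_eq_dist hp, ← Walk.length_append, Walk.take_spec]

end SimpleGraph

section IsGate

variable {V W : Type*} {G : SimpleGraph V} {S : Set V}

lemma isGate_self {x : V} (hx : x ∈ S) : IsGate G S x x :=
  ⟨hx, fun _ _ => by rw [dist_self, zero_add]⟩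

lemma IsGate.sInf_dist_image {v u : V} (hu : IsGate G S v u) :
    sInf (G.dist v '' S) = G.dist v u :=
  le_antisymm (Nat.sInf_le ⟨u, hu.1, rfl⟩) <|
    le_csInf ⟨_, u, hu.1, rfl⟩ fun _ ⟨s, hs, hd⟩ =>
      hd ▸ hu.2 s hs ▸ Nat.le_add_right _ _

lemma IsGate.image {G' : SimpleGraph W} {v u : V} (hu : IsGate G S v u) (γ : G ≃g G') :
    IsGate G' (γ '' S) (γ v) (γ u) := by
  refine ⟨⟨u, hu.1, rfl⟩, ?_⟩
  rintro _ ⟨s, hs, rfl⟩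
  simpa only [Iso.dist_map] using hu.2 s hs

/-- Adding the two gate identities to the triangle inequalities through `x` gives
`2 * dist u u' ≤ 0`. -/
lemma IsGate.eq_of_dist_add_eq (hG : G.Connected) {v u v' u' x : V} (hu : IsGate G S v u)
    (hu' : IsGate G S v' u') (hx : G.dist v x + G.dist x u = G.dist v u)
    (hx' : G.dist v' x + G.dist x u' = G.dist v' u') : u = u' := by
  have h₁ := hu.2 u' hu'.1
  have h₂ := hu'.2 u hu.1
  have t₁ := hG.dist_triangle (u := v) (v := x) (w := u')
  have t₂ := hG.dist_triangle (u := v') (v := x) (w := u)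
  rw [dist_comm (u := u') (v := u)] at h₂
  exact (hG.dist_eq_zero_iff).mp (by omega)

lemma IsGate.eq_of_mem_of_dist_add_eq (hG : G.Connected) {v u x : V} (hu : IsGate G S v u)
    (hxS : x ∈ S) (hx : G.dist v x + G.dist x u = G.dist v u) : x = u :=
  (hu.eq_of_dist_add_eq hG (isGate_self hxS) hx (by rw [dist_self])).symm

end IsGate

theorem dist_to_translate_of_gate_moved_general {V : Type*} (G : SimpleGraph V) (hT : G.IsTree)
    (γ : G ≃g G) (A : Set V) (hAconn : (G.induce A).Connected)
    (hγA : ⇑γ '' A = A) (v : V) (u : V) (hu : IsGate G A v u)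
    (hne : γ u ≠ u) :
    G.dist v (γ v) = 2 * sInf (G.dist v '' A) + G.dist u (γ u) := by
  classical
  have hG := hT.connected
  have hu' : IsGate G A (γ v) (γ u) := hγA ▸ hu.image γ
  obtain ⟨p₁, hp₁, hp₁len⟩ := hG.exists_path_of_dist v u
  obtain ⟨p₂, hp₂, hp₂A⟩ :=
    exists_isPath_forall_mem_support hAconn.preconnected hu.1 hu'.1
  let p₃ : G.Walk (γ v) (γ u) := p₁.map γ.toHom
  have hp₃ : p₃.IsPath := hp₁.map γ.injective
  have on_p₁ := fun x => hT.isAcyclic.dist_add_dist_of_mem_support (x := x) hp₁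
  have on_p₃ := fun x => hT.isAcyclic.dist_add_dist_of_mem_support (x := x) hp₃
  have hq : (p₁.append p₂).IsPath := hp₁.append hp₂ fun x hx₁ hx₂ =>
    hu.eq_of_mem_of_dist_add_eq hG (hp₂A x hx₂) (on_p₁ x hx₁)
  have hr : ((p₁.append p₂).append p₃.reverse).IsPath := by
    refine hq.append hp₃.reverse fun x hx hx₃ => ?_
    rw [Walk.support_reverse, List.mem_reverse] at hx₃
    rcases (Walk.mem_support_append_iff _ _).mp hx with hx₁ | hx₂
    · exact absurd (hu.eq_of_dist_add_eq hG hu' (on_p₁ x hx₁) (on_p₃ x hx₃)).symm hne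
    · exact hu'.eq_of_mem_of_dist_add_eq hG (hp₂A x hx₂) (on_p₃ x hx₃)
  rw [hu.sInf_dist_image, ← hT.isAcyclic.length_eq_dist hr, ← hT.isAcyclic.length_eq_dist hp₂]
  simp only [Walk.length_append, Walk.length_reverse, p₃, Walk.length_map, hp₁len]
  omega

/-- If `γ` is an automorphism of a tree `G` stabilizing a nonempty connected set
of vertices `A`, `v ∉ A` has gate `u` in `A`, and `γ u ≠ u`, then
`dist v (γ v) = 2 * dist(v, A) + dist u (γ u)`. -/
theorem dist_to_translate_of_gate_moved {V : Type*} (G : SimpleGraph V) (hT : G.IsTree)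
    (γ : G ≃g G) (A : Set V) (hA : A.Nonempty) (hAconn : (G.induce A).Connected)
    (hγA : ⇑γ '' A = A) (v : V) (hv : v ∉ A) (u : V) (hu : IsGate G A v u)
    (hne : γ u ≠ u) :
    G.dist v (γ v) = 2 * sInf (G.dist v '' A) + G.dist u (γ u) :=
  dist_to_translate_of_gate_moved_general G hT γ A hAconn hγA v u hu hne
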